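/- arXiv:2403.17504 — 3 statements merged into one kernel-verified Lean document; each statement's English description precedes it below -/
import Mathlib

section
/- Under the HLLS/HLLES perturbation update ρ̂' = (1-2ν)ρ̂, m̂' = m̂ - 2νu₀ρ̂, p̂' = (1-2ν)p̂, the Lyapunov difference is ΔV = -(a₀²/ρ₀)·4ν(1-2ν)ρ̂² - (a₀²/(ρ₀u₀))·4ν·ρ̂·m̂ - (1/(ρ₀a₀²))·4ν(1-ν)p̂², where V(ρ̂,m̂,p̂) = (a₀²/ρ₀)ρ̂² + (a₀²/(ρ₀u₀²))m̂² + (1/(ρ₀a₀²))p̂². -/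
theorem hlls_hlles_lyapunov_difference
    (a₀ ρ₀ u₀ ν : ℝ) (ha : 0 < a₀) (hρ₀ : 0 < ρ₀) (hu₀ : 0 < u₀)
    (hν : 0 < ν) (hν1 : ν < 1)
    (V : ℝ → ℝ → ℝ → ℝ)
    (hV : ∀ ρ m p, V ρ m p =
      (a₀ ^ 2 / ρ₀) * ρ ^ 2 + (a₀ ^ 2 / (ρ₀ * u₀ ^ 2)) * m ^ 2 +
        (1 / (ρ₀ * a₀ ^ 2)) * p ^ 2)
    (ρ m p ρ' m' p' : ℝ)
    (hρ' : ρ' = (1 - 2 * ν) * ρ)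
    (hm' : m' = m - 2 * ν * u₀ * ρ)
    (hp' : p' = (1 - 2 * ν) * p) :
    V ρ' m' p' - V ρ m p =
      -(a₀ ^ 2 / ρ₀) * (4 * ν * (1 - 2 * ν)) * ρ ^ 2
        - (a₀ ^ 2 / (ρ₀ * u₀)) * (4 * ν) * ρ * m
        - (1 / (ρ₀ * a₀ ^ 2)) * (4 * ν * (1 - ν)) * p ^ 2 := by
  subst hρ' hm' hp'
  rw [hV, hV]
  field_simp
  ring
end

section
/- There exist ρ̂ ≠ 0 and m̂ with ρ̂·m̂ < 0 and |m̂/u₀| sufficiently larger than |ρ̂| such that the HLLS/HLLES Lyapunov difference ΔV = -(a₀²/ρ₀)4ν(1-2ν)ρ̂² - (a₀²/(ρ₀u₀))4νρ̂m̂ - (1/(ρ₀a₀²))4ν(1-ν)p̂² is strictly positive (taking p̂ = 0). -/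
theorem hlls_hlles_can_be_unstable
    (a₀ ρ₀ u₀ ν : ℝ) (ha : 0 < a₀) (hρ₀ : 0 < ρ₀) (hu₀ : 0 < u₀)
    (hν : 0 < ν) (hν1 : ν < 1 / 2)
    (ΔV : ℝ → ℝ → ℝ → ℝ)
    (hΔV : ∀ ρ m p, ΔV ρ m p =
      -(a₀ ^ 2 / ρ₀) * (4 * ν * (1 - 2 * ν)) * ρ ^ 2
        - (a₀ ^ 2 / (ρ₀ * u₀)) * (4 * ν) * ρ * m
        - (1 / (ρ₀ * a₀ ^ 2)) * (4 * ν * (1 - ν)) * p ^ 2) :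
    ∃ ρ m : ℝ, ρ ≠ 0 ∧ ρ * m < 0 ∧ |ρ| < |m / u₀| ∧ 0 < ΔV ρ m 0 := by
  refine ⟨1, -2 * u₀, one_ne_zero, by nlinarith, ?_, ?_⟩
  · rw [abs_one]
    have : -2 * u₀ / u₀ = -2 := by field_simp
    rw [this]
    norm_num
  · rw [hΔV]
    have h1 : a₀ ^ 2 / (ρ₀ * u₀) * (4 * ν) * 1 * (-2 * u₀) = -(a₀ ^ 2 / ρ₀ * (8 * ν)) := by
      field_simp; ring
    have h2 : 0 < a₀ ^ 2 / ρ₀ := by positivity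
    rw [h1]
    nlinarith [mul_pos h2 hν, mul_pos (mul_pos h2 hν) hν]
end

section
/- Under the HLLCM/HLLEC one-step perturbation update with zero shear velocity perturbation (so m̂ = u₀ρ̂): ρ̂' = ρ̂ - 2νp̂/a₀², m̂' = m̂ - 2ν(m̂ - u₀ρ̂ + u₀p̂/a₀²), p̂' = (1-2ν)p̂, the Lyapunov difference equals ΔV = -(4ν/ρ₀)ρ̂p̂ + (8ν²/(ρ₀a₀²))p̂² - (4ν/(ρ₀u₀))m̂p̂ - (4ν(1-ν)/(ρ₀a₀²))p̂², and this quantity can be positive (e.g., when ρ̂p̂ < 0 and m̂p̂ < 0 with p̂ ≠ 0). -/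
theorem hllcm_hllec_lyapunov_difference_zero_shear
    (a₀ ρ₀ u₀ ν : ℝ) (ha : 0 < a₀) (hρ₀ : 0 < ρ₀) (hu₀ : 0 < u₀)
    (hν : 0 < ν) (hν1 : ν < 1)
    (V : ℝ → ℝ → ℝ → ℝ)
    (hV : ∀ ρ m p, V ρ m p =
      (a₀ ^ 2 / ρ₀) * ρ ^ 2 + (a₀ ^ 2 / (ρ₀ * u₀ ^ 2)) * m ^ 2 +
        (1 / (ρ₀ * a₀ ^ 2)) * p ^ 2) :
    (∀ ρ m p ρ' m' p' : ℝ,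
      m = u₀ * ρ →
      ρ' = ρ - 2 * ν * p / a₀ ^ 2 →
      m' = m - 2 * ν * (m - u₀ * ρ + u₀ * p / a₀ ^ 2) →
      p' = (1 - 2 * ν) * p →
      V ρ' m' p' - V ρ m p =
        -(4 * ν / ρ₀) * ρ * p + (8 * ν ^ 2 / (ρ₀ * a₀ ^ 2)) * p ^ 2
          - (4 * ν / (ρ₀ * u₀)) * m * p
          - (4 * ν * (1 - ν) / (ρ₀ * a₀ ^ 2)) * p ^ 2) ∧
    (∃ ρ m p : ℝ, ρ * p < 0 ∧ m * p < 0 ∧ p ≠ 0 ∧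
      0 < -(4 * ν / ρ₀) * ρ * p + (8 * ν ^ 2 / (ρ₀ * a₀ ^ 2)) * p ^ 2
          - (4 * ν / (ρ₀ * u₀)) * m * p
          - (4 * ν * (1 - ν) / (ρ₀ * a₀ ^ 2)) * p ^ 2) := by
  constructor
  · intro ρ m p ρ' m' p' hm hρ' hm' hp'
    subst hm hρ' hm' hp'
    rw [hV, hV]
    field_simp
    ring
  · refine ⟨-(1 / a₀ ^ 2), -1, 1, ?_, by norm_num, one_ne_zero, ?_⟩
    · have : (0:ℝ) < 1 / a₀ ^ 2 := by positivity
      nlinarith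
    · have key : -(4 * ν / ρ₀) * (-(1 / a₀ ^ 2)) * 1 + (8 * ν ^ 2 / (ρ₀ * a₀ ^ 2)) * 1 ^ 2
          - (4 * ν / (ρ₀ * u₀)) * (-1) * 1 - (4 * ν * (1 - ν) / (ρ₀ * a₀ ^ 2)) * 1 ^ 2
          = 12 * ν ^ 2 / (ρ₀ * a₀ ^ 2) + 4 * ν / (ρ₀ * u₀) := by
        field_simp
        ring
      rw [key]
      positivity
end
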